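/- Let α_k, γ_k (1 ≤ k ≤ N) and β_{kl} (1 ≤ k < l ≤ N) be real numbers with ω_k·β_{kl} = 0, ω_l·β_{kl} = 0 and ω_k·γ_k = 0, and let χ_{α,β,γ} be the alternating bilinear form on u_ω(N+1) that vanishes on every pair of distinct basis elements except χ_{α,β,γ}(J_{ab},M_{ab}) = Σ_{s=a+1}^{b} ω_{a,s−1}ω_{s,b}·α_s, χ_{α,β,γ}(B_k,B_l) = β_{kl} and χ_{α,β,γ}(B_k,I) = γ_k. Then χ_{α,β,γ} is a 2-coboundary if and only if β_{kl} = 0 for all 1 ≤ k < l ≤ N, γ_k = 0 for all 1 ≤ k ≤ N, and α_k = 0 for every k with ω_k = 0. -/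

import Mathlib

open Finset

noncomputable section

/-- `ckW ω a b` is the product `ω_{ab} = ω_{a+1} ω_{a+2} ⋯ ω_b` (so `ckW ω a a = 1`). -/
def ckW (ω : ℕ → ℝ) (a b : ℕ) : ℝ := ∏ s ∈ Finset.Icc (a + 1) b, ω s

/-- `ckKappa a b l = δ_{a,l-1} − δ_{b,l-1} + δ_{b,l} − δ_{a,l}`. -/
def ckKappa (a b l : ℕ) : ℝ :=
  (if a = l - 1 then (1 : ℝ) else 0) - (if b = l - 1 then (1 : ℝ) else 0)
    + (if b = l then (1 : ℝ) else 0) - (if a = l then (1 : ℝ) else 0)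

/-- A 2-cocycle on a real Lie algebra: an alternating bilinear form satisfying the
cocycle identity. -/
def IsLieCocycle {L : Type*} [LieRing L] [LieAlgebra ℝ L]
    (ξ : L →ₗ[ℝ] L →ₗ[ℝ] ℝ) : Prop :=
  (∀ x, ξ x x = 0) ∧ ∀ x y z, ξ ⁅x, y⁆ z + ξ ⁅y, z⁆ x + ξ ⁅z, x⁆ y = 0

/-- A 2-coboundary on a real Lie algebra: the bilinear form `(x, y) ↦ μ ⁅x, y⁆` for a
linear functional `μ`. -/
def IsLieCoboundary {L : Type*} [LieRing L] [LieAlgebra ℝ L]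
    (ξ : L →ₗ[ℝ] L →ₗ[ℝ] ℝ) : Prop :=
  ∃ μ : L →ₗ[ℝ] ℝ, ∀ x y, ξ x y = μ ⁅x, y⁆

/-- The commutation relations of the special unitary Cayley–Klein algebra `su_ω(N+1)`
for the generating family `J, M, B`. -/
structure SUBrackets {L : Type*} [LieRing L] [LieAlgebra ℝ L] (N : ℕ) (ω : ℕ → ℝ)
    (J M : ℕ → ℕ → L) (B : ℕ → L) : Prop where
  jj_left : ∀ a b c, a < b → b < c → c ≤ N → ⁅J a b, J a c⁆ = ckW ω a b • J b c
  jj_mid : ∀ a b c, a < b → b < c → c ≤ N → ⁅J a b, J b c⁆ = -(J a c)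
  jj_right : ∀ a b c, a < b → b < c → c ≤ N → ⁅J a c, J b c⁆ = ckW ω b c • J a b
  mm_left : ∀ a b c, a < b → b < c → c ≤ N → ⁅M a b, M a c⁆ = ckW ω a b • J b c
  mm_mid : ∀ a b c, a < b → b < c → c ≤ N → ⁅M a b, M b c⁆ = J a c
  mm_right : ∀ a b c, a < b → b < c → c ≤ N → ⁅M a c, M b c⁆ = ckW ω b c • J a b
  jm_left : ∀ a b c, a < b → b < c → c ≤ N → ⁅J a b, M a c⁆ = ckW ω a b • M b c
  jm_mid : ∀ a b c, a < b → b < c → c ≤ N → ⁅J a b, M b c⁆ = -(M a c)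
  jm_right : ∀ a b c, a < b → b < c → c ≤ N → ⁅J a c, M b c⁆ = -(ckW ω b c • M a b)
  mj_left : ∀ a b c, a < b → b < c → c ≤ N → ⁅M a b, J a c⁆ = -(ckW ω a b • M b c)
  mj_mid : ∀ a b c, a < b → b < c → c ≤ N → ⁅M a b, J b c⁆ = -(M a c)
  mj_right : ∀ a b c, a < b → b < c → c ≤ N → ⁅M a c, J b c⁆ = ckW ω b c • M a b
  jj_disj : ∀ a b d e, a < b → b ≤ N → d < e → e ≤ N →
    a ≠ d → a ≠ e → b ≠ d → b ≠ e → ⁅J a b, J d e⁆ = 0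
  mm_disj : ∀ a b d e, a < b → b ≤ N → d < e → e ≤ N →
    a ≠ d → a ≠ e → b ≠ d → b ≠ e → ⁅M a b, M d e⁆ = 0
  jm_disj : ∀ a b d e, a < b → b ≤ N → d < e → e ≤ N →
    a ≠ d → a ≠ e → b ≠ d → b ≠ e → ⁅J a b, M d e⁆ = 0
  jb : ∀ a b l, a < b → b ≤ N → 1 ≤ l → l ≤ N → ⁅J a b, B l⁆ = ckKappa a b l • M a b
  mb : ∀ a b l, a < b → b ≤ N → 1 ≤ l → l ≤ N → ⁅M a b, B l⁆ = -(ckKappa a b l • J a b)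
  jm_same : ∀ a b, a < b → b ≤ N →
    ⁅J a b, M a b⁆ = (-(2 * ckW ω a b)) • ∑ s ∈ Finset.Icc (a + 1) b, B s
  bb : ∀ k l, 1 ≤ k → k < l → l ≤ N → ⁅B k, B l⁆ = 0

/-- Index predicate for the basis of `su_ω(N+1)`. -/
def suIdxP (N : ℕ) : (ℕ × ℕ) ⊕ ((ℕ × ℕ) ⊕ ℕ) → Prop
  | Sum.inl (a, b) => a < b ∧ b ≤ N
  | Sum.inr (Sum.inl (a, b)) => a < b ∧ b ≤ N
  | Sum.inr (Sum.inr l) => 1 ≤ l ∧ l ≤ N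

/-- Index type for the basis of `su_ω(N+1)`. -/
def SUIdx (N : ℕ) : Type := {x // suIdxP N x}

/-- The basis family `{J_{ab}} ∪ {M_{ab}} ∪ {B_l}` of `su_ω(N+1)`. -/
def suFam {L : Type*} (N : ℕ) (J M : ℕ → ℕ → L) (B : ℕ → L) : SUIdx N → L :=
  fun x =>
    match x.1 with
    | Sum.inl (a, b) => J a b
    | Sum.inr (Sum.inl (a, b)) => M a b
    | Sum.inr (Sum.inr l) => B l

/-- The family `{J_{ab}} ∪ {M_{ab}} ∪ {B_l}` is a basis of `L`. -/
def SUBasis {L : Type*} [LieRing L] [LieAlgebra ℝ L] (N : ℕ)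
    (J M : ℕ → ℕ → L) (B : ℕ → L) : Prop :=
  LinearIndependent ℝ (suFam N J M B) ∧
    ⊤ ≤ Submodule.span ℝ (Set.range (suFam N J M B))

/-- The extra central generator `I` of `u_ω(N+1)` commutes with everything. -/
structure UCentral {L : Type*} [LieRing L] [LieAlgebra ℝ L] (N : ℕ)
    (J M : ℕ → ℕ → L) (B : ℕ → L) (I : L) : Prop where
  jcen : ∀ a b, a < b → b ≤ N → ⁅J a b, I⁆ = 0
  mcen : ∀ a b, a < b → b ≤ N → ⁅M a b, I⁆ = 0
  bcen : ∀ l, 1 ≤ l → l ≤ N → ⁅B l, I⁆ = 0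

/-- Index type for the basis of `u_ω(N+1)`. -/
def UIdx (N : ℕ) : Type := SUIdx N ⊕ Unit

/-- The basis family `{J_{ab}} ∪ {M_{ab}} ∪ {B_l} ∪ {I}` of `u_ω(N+1)`. -/
def uFam {L : Type*} (N : ℕ) (J M : ℕ → ℕ → L) (B : ℕ → L) (I : L) : UIdx N → L :=
  Sum.elim (suFam N J M B) fun _ => I

/-- The family `{J_{ab}} ∪ {M_{ab}} ∪ {B_l} ∪ {I}` is a basis of `L`. -/
def UBasis {L : Type*} [LieRing L] [LieAlgebra ℝ L] (N : ℕ)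
    (J M : ℕ → ℕ → L) (B : ℕ → L) (I : L) : Prop :=
  LinearIndependent ℝ (uFam N J M B I) ∧
    ⊤ ≤ Submodule.span ℝ (Set.range (uFam N J M B I))

lemma ckW_self (ω : ℕ → ℝ) (a : ℕ) : ckW ω a a = 1 := by
  rw [ckW, Finset.Icc_eq_empty (by omega), Finset.prod_empty]

lemma ckW_succ (ω : ℕ → ℝ) (k : ℕ) (hk : 1 ≤ k) : ckW ω (k-1) k = ω k := by
  rw [ckW, show k-1+1 = k by omega, Finset.Icc_self, Finset.prod_singleton]

lemma ckW_split (ω : ℕ → ℝ) {a s b : ℕ} (h1 : a < s) (h2 : s ≤ b) :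
    ckW ω a b = ckW ω a (s-1) * ω s * ckW ω s b := by
  unfold ckW
  rw [Finset.Icc_add_one_left_eq_Ioc, Finset.Icc_add_one_left_eq_Ioc, Finset.Icc_add_one_left_eq_Ioc,
    ← Finset.prod_Ioc_consecutive ω (show a ≤ s by omega) h2]
  congr 1
  conv_lhs => rw [show s = (s-1)+1 by omega]
  rw [Finset.prod_Ioc_succ_top (by omega), show s-1+1 = s by omega]

/-- coefficient function for the coboundary potential -/
def uCF (N : ℕ) (ω α : ℕ → ℝ) : UIdx N → ℝ
  | Sum.inl ⟨Sum.inr (Sum.inr l), _⟩ => if ω l = 0 then 0 else -(α l)/(2*ω l)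
  | _ => 0

theorem u_reduced_coboundary_iff {L : Type*} [LieRing L] [LieAlgebra ℝ L]
    (N : ℕ) (hN : 1 ≤ N) (ω : ℕ → ℝ) (J M : ℕ → ℕ → L) (B : ℕ → L) (I : L)
    (hbr : SUBrackets N ω J M B) (hcen : UCentral N J M B I) (hbasis : UBasis N J M B I)
    (α γ : ℕ → ℝ) (β : ℕ → ℕ → ℝ)
    (hβ : (∀ k l, 1 ≤ k → k < l → l ≤ N → ω k * β k l = 0 ∧ ω l * β k l = 0))
    (hγ : (∀ k, 1 ≤ k → k ≤ N → ω k * γ k = 0))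
    (χ : L →ₗ[ℝ] L →ₗ[ℝ] ℝ) (halt : ∀ x, χ x x = 0)
    (hval : (∀ a b d e, a < b → b ≤ N → d < e → e ≤ N → (a, b) ≠ (d, e) →
        χ (J a b) (J d e) = 0 ∧ χ (M a b) (M d e) = 0 ∧
        χ (J a b) (M d e) = 0 ∧ χ (M a b) (J d e) = 0) ∧
      (∀ a b l, a < b → b ≤ N → 1 ≤ l → l ≤ N →
        χ (J a b) (B l) = 0 ∧ χ (M a b) (B l) = 0) ∧
      (∀ a b, a < b → b ≤ N →
        χ (J a b) (M a b) = ∑ s ∈ Finset.Icc (a + 1) b, ckW ω a (s - 1) * ckW ω s b * α s) ∧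
      (∀ k l, 1 ≤ k → k < l → l ≤ N → χ (B k) (B l) = β k l) ∧
      (∀ a b, a < b → b ≤ N → χ (J a b) I = 0 ∧ χ (M a b) I = 0) ∧
      (∀ k, 1 ≤ k → k ≤ N → χ (B k) I = γ k)) :
    IsLieCoboundary χ ↔
      ((∀ k l, 1 ≤ k → k < l → l ≤ N → β k l = 0) ∧
        (∀ k, 1 ≤ k → k ≤ N → γ k = 0) ∧
        (∀ k, 1 ≤ k → k ≤ N → ω k = 0 → α k = 0)) := by
  constructor
  · rintro ⟨μ, hμ⟩
    refine ⟨?_, ?_, ?_⟩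
    · intro k l hk hkl hlN
      have h1 := hval.2.2.2.1 k l hk hkl hlN
      rw [hμ, hbr.bb k l hk hkl hlN, map_zero] at h1
      exact h1.symm
    · intro k hk hkN
      have h1 := hval.2.2.2.2.2 k hk hkN
      rw [hμ, hcen.bcen k hk hkN, map_zero] at h1
      exact h1.symm
    · intro k hk hkN hωk
      have hab : k - 1 < k := by omega
      have h1 := hval.2.2.1 (k-1) k hab hkN
      have hIcc : Finset.Icc (k-1+1) k = {k} := by
        rw [show k-1+1 = k by omega, Finset.Icc_self]
      rw [hμ, hbr.jm_same (k-1) k hab hkN, hIcc] at h1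
      simp only [Finset.sum_singleton, map_smul, smul_eq_mul, ckW_self,
        ckW_succ ω k hk, hωk, mul_zero, neg_zero, zero_mul, one_mul, mul_one] at h1
      linarith [h1]
  · rintro ⟨hβ0, hγ0, hα0⟩
    obtain ⟨hli, hsp⟩ := hbasis
    set bas : Module.Basis (UIdx N) ℝ L := Module.Basis.mk hli hsp with hbasdef
    set μ : L →ₗ[ℝ] ℝ := bas.constr ℝ (uCF N ω α) with hμdef
    refine ⟨μ, ?_⟩
    have hμJ : ∀ a b, a < b → b ≤ N → μ (J a b) = 0 := by
      intro a b h1 h2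
      have h : bas (Sum.inl ⟨Sum.inl (a,b), ⟨h1,h2⟩⟩) = J a b := by
        rw [hbasdef]; exact Module.Basis.mk_apply hli hsp _
      rw [← h, hμdef]; exact (bas.constr_basis ℝ (uCF N ω α) _).trans rfl
    have hμM : ∀ a b, a < b → b ≤ N → μ (M a b) = 0 := by
      intro a b h1 h2
      have h : bas (Sum.inl ⟨Sum.inr (Sum.inl (a,b)), ⟨h1,h2⟩⟩) = M a b := by
        rw [hbasdef]; exact Module.Basis.mk_apply hli hsp _
      rw [← h, hμdef]; exact (bas.constr_basis ℝ (uCF N ω α) _).trans rfl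
    have hμB : ∀ l, 1 ≤ l → l ≤ N → μ (B l) = if ω l = 0 then 0 else -(α l)/(2*ω l) := by
      intro l h1 h2
      have h : bas (Sum.inl ⟨Sum.inr (Sum.inr l), ⟨h1,h2⟩⟩) = B l := by
        rw [hbasdef]; exact Module.Basis.mk_apply hli hsp _
      rw [← h, hμdef]; exact (bas.constr_basis ℝ (uCF N ω α) _).trans rfl
    have hχskew : ∀ x y, χ y x = - χ x y := by
      intro x y
      have h := halt (x + y)
      simp only [map_add, LinearMap.add_apply] at h
      have h1 := halt x; have h2 := halt y; linarith
    have hsymm : ∀ x y : L, χ x y = μ ⁅x, y⁆ → χ y x = μ ⁅y, x⁆ := by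
      intro x y h
      rw [hχskew x y, h, show (⁅x, y⁆ : L) = -⁅y, x⁆ from (lie_skew x y).symm,
        map_neg, neg_neg]
    have hJJ : ∀ a b d e, a < b → b ≤ N → d < e → e ≤ N →
        χ (J a b) (J d e) = μ ⁅J a b, J d e⁆ := by
      intro a b d e hab hbN hde heN
      by_cases heq : (a,b) = (d,e)
      · obtain ⟨rfl, rfl⟩ := Prod.mk.inj heq
        rw [lie_self, map_zero, halt]
      rw [(hval.1 a b d e hab hbN hde heN heq).1]
      symm
      by_cases had : a = d
      · subst had
        have hbe : b ≠ e := fun h => heq (by rw [h])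
        rcases lt_or_gt_of_ne hbe with h | h
        · rw [hbr.jj_left a b e hab h heN, map_smul, hμJ b e h heN, smul_zero]
        · rw [← lie_skew, hbr.jj_left a e b hde h hbN, map_neg, map_smul,
            hμJ e b h hbN, smul_zero, neg_zero]
      by_cases hae : a = e
      · subst hae
        rw [← lie_skew, hbr.jj_mid d a b hde hab hbN, map_neg, map_neg,
          hμJ d b (lt_trans hde hab) hbN, neg_zero, neg_zero]
      by_cases hbd : b = d
      · subst hbd
        rw [hbr.jj_mid a b e hab hde heN, map_neg, hμJ a e (lt_trans hab hde) heN, neg_zero]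
      by_cases hbe : b = e
      · subst hbe
        rcases lt_trichotomy a d with h | h | h
        · rw [hbr.jj_right a d b h hde hbN, map_smul, hμJ a d h (by omega), smul_zero]
        · exact absurd h had
        · rw [← lie_skew, hbr.jj_right d a b h hab hbN, map_neg, map_smul,
            hμJ d a h (by omega), smul_zero, neg_zero]
      rw [hbr.jj_disj a b d e hab hbN hde heN had hae hbd hbe, map_zero]
    have hMM : ∀ a b d e, a < b → b ≤ N → d < e → e ≤ N →
        χ (M a b) (M d e) = μ ⁅M a b, M d e⁆ := by
      intro a b d e hab hbN hde heN
      by_cases heq : (a,b) = (d,e)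
      · obtain ⟨rfl, rfl⟩ := Prod.mk.inj heq
        rw [lie_self, map_zero, halt]
      rw [(hval.1 a b d e hab hbN hde heN heq).2.1]
      symm
      by_cases had : a = d
      · subst had
        have hbe : b ≠ e := fun h => heq (by rw [h])
        rcases lt_or_gt_of_ne hbe with h | h
        · rw [hbr.mm_left a b e hab h heN, map_smul, hμJ b e h heN, smul_zero]
        · rw [← lie_skew, hbr.mm_left a e b hde h hbN, map_neg, map_smul,
            hμJ e b h hbN, smul_zero, neg_zero]
      by_cases hae : a = e
      · subst hae
        rw [← lie_skew, hbr.mm_mid d a b hde hab hbN, map_neg,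
          hμJ d b (lt_trans hde hab) hbN, neg_zero]
      by_cases hbd : b = d
      · subst hbd
        rw [hbr.mm_mid a b e hab hde heN, hμJ a e (lt_trans hab hde) heN]
      by_cases hbe : b = e
      · subst hbe
        rcases lt_trichotomy a d with h | h | h
        · rw [hbr.mm_right a d b h hde hbN, map_smul, hμJ a d h (by omega), smul_zero]
        · exact absurd h had
        · rw [← lie_skew, hbr.mm_right d a b h hab hbN, map_neg, map_smul,
            hμJ d a h (by omega), smul_zero, neg_zero]
      rw [hbr.mm_disj a b d e hab hbN hde heN had hae hbd hbe, map_zero]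
    have hJM : ∀ a b d e, a < b → b ≤ N → d < e → e ≤ N →
        χ (J a b) (M d e) = μ ⁅J a b, M d e⁆ := by
      intro a b d e hab hbN hde heN
      by_cases heq : (a,b) = (d,e)
      · obtain ⟨rfl, rfl⟩ := Prod.mk.inj heq
        rw [hval.2.2.1 a b hab hbN, hbr.jm_same a b hab hbN, map_smul, map_sum,
          smul_eq_mul, Finset.mul_sum]
        apply Finset.sum_congr rfl
        intro s hs
        rw [Finset.mem_Icc] at hs
        rw [hμB s (by omega) (by omega)]
        by_cases hω : ω s = 0
        · rw [if_pos hω, hα0 s (by omega) (by omega) hω]; ring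
        · rw [if_neg hω, ckW_split ω (show a < s by omega) hs.2]
          field_simp
      rw [(hval.1 a b d e hab hbN hde heN heq).2.2.1]
      symm
      by_cases had : a = d
      · subst had
        have hbe : b ≠ e := fun h => heq (by rw [h])
        rcases lt_or_gt_of_ne hbe with h | h
        · rw [hbr.jm_left a b e hab h heN, map_smul, hμM b e h heN, smul_zero]
        · rw [← lie_skew, hbr.mj_left a e b hde h hbN, map_neg, map_neg, map_smul,
            hμM e b h hbN, smul_zero, neg_zero, neg_zero]
      by_cases hae : a = e
      · subst hae
        rw [← lie_skew, hbr.mj_mid d a b hde hab hbN, map_neg, map_neg,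
          hμM d b (lt_trans hde hab) hbN, neg_zero, neg_zero]
      by_cases hbd : b = d
      · subst hbd
        rw [hbr.jm_mid a b e hab hde heN, map_neg, hμM a e (lt_trans hab hde) heN, neg_zero]
      by_cases hbe : b = e
      · subst hbe
        rcases lt_trichotomy a d with h | h | h
        · rw [hbr.jm_right a d b h hde hbN, map_neg, map_smul, hμM a d h (by omega),
            smul_zero, neg_zero]
        · exact absurd h had
        · rw [← lie_skew, hbr.mj_right d a b h hab hbN, map_neg, map_smul,
            hμM d a h (by omega), smul_zero, neg_zero]
      rw [hbr.jm_disj a b d e hab hbN hde heN had hae hbd hbe, map_zero]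
    have hJB : ∀ a b l, a < b → b ≤ N → 1 ≤ l → l ≤ N →
        χ (J a b) (B l) = μ ⁅J a b, B l⁆ := by
      intro a b l hab hbN hl hlN
      rw [(hval.2.1 a b l hab hbN hl hlN).1, hbr.jb a b l hab hbN hl hlN, map_smul,
        hμM a b hab hbN, smul_zero]
    have hMB : ∀ a b l, a < b → b ≤ N → 1 ≤ l → l ≤ N →
        χ (M a b) (B l) = μ ⁅M a b, B l⁆ := by
      intro a b l hab hbN hl hlN
      rw [(hval.2.1 a b l hab hbN hl hlN).2, hbr.mb a b l hab hbN hl hlN, map_neg, map_smul,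
        hμJ a b hab hbN, smul_zero, neg_zero]
    have hJI : ∀ a b, a < b → b ≤ N → χ (J a b) I = μ ⁅J a b, I⁆ := by
      intro a b hab hbN
      rw [(hval.2.2.2.2.1 a b hab hbN).1, hcen.jcen a b hab hbN, map_zero]
    have hMI : ∀ a b, a < b → b ≤ N → χ (M a b) I = μ ⁅M a b, I⁆ := by
      intro a b hab hbN
      rw [(hval.2.2.2.2.1 a b hab hbN).2, hcen.mcen a b hab hbN, map_zero]
    have hBB : ∀ k l, 1 ≤ k → k ≤ N → 1 ≤ l → l ≤ N →
        χ (B k) (B l) = μ ⁅B k, B l⁆ := by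
      intro k l hk hkN hl hlN
      rcases lt_trichotomy k l with h | rfl | h
      · rw [hval.2.2.2.1 k l hk h hlN, hβ0 k l hk h hlN, hbr.bb k l hk h hlN, map_zero]
      · rw [lie_self, map_zero, halt]
      · exact hsymm _ _ (by
          rw [hval.2.2.2.1 l k hl h hkN, hβ0 l k hl h hkN, hbr.bb l k hl h hkN, map_zero])
    have hBI : ∀ k, 1 ≤ k → k ≤ N → χ (B k) I = μ ⁅B k, I⁆ := by
      intro k hk hkN
      rw [hval.2.2.2.2.2 k hk hkN, hγ0 k hk hkN, hcen.bcen k hk hkN, map_zero]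
    have hfam : ∀ i j : UIdx N,
        χ (uFam N J M B I i) (uFam N J M B I j) = μ ⁅uFam N J M B I i, uFam N J M B I j⁆ := by
      rintro (⟨(⟨a,b⟩ | ⟨a,b⟩ | k), hx⟩ | _) (⟨(⟨d,e⟩ | ⟨d,e⟩ | l), hy⟩ | _) <;>
        first
        | (obtain ⟨h1, h2⟩ := hx; obtain ⟨h3, h4⟩ := hy
           first
           | exact hJJ a b d e h1 h2 h3 h4
           | exact hJM a b d e h1 h2 h3 h4
           | exact hsymm _ _ (hJM d e a b h3 h4 h1 h2)
           | exact hMM a b d e h1 h2 h3 h4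
           | exact hJB a b l h1 h2 h3 h4
           | exact hMB a b l h1 h2 h3 h4
           | exact hsymm _ _ (hJB d e k h3 h4 h1 h2)
           | exact hsymm _ _ (hMB d e k h3 h4 h1 h2)
           | exact hBB k l h1 h2 h3 h4)
        | (obtain ⟨h1, h2⟩ := hx
           first
           | exact hJI a b h1 h2
           | exact hMI a b h1 h2
           | exact hBI k h1 h2)
        | (obtain ⟨h3, h4⟩ := hy
           first
           | exact hsymm _ _ (hJI d e h3 h4)
           | exact hsymm _ _ (hMI d e h3 h4)
           | exact hsymm _ _ (hBI l h3 h4))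
        | (rw [lie_self, map_zero]; exact halt _)
    have hΞ : χ = LinearMap.mk₂ ℝ (fun x y => μ ⁅x, y⁆)
        (fun x x' y => by simp [add_lie])
        (fun c x y => by simp [smul_lie])
        (fun x y y' => by simp [lie_add])
        (fun c x y => by simp [lie_smul]) := by
      apply Module.Basis.ext bas
      intro i
      apply Module.Basis.ext bas
      intro j
      rw [hbasdef, Module.Basis.mk_apply, Module.Basis.mk_apply, LinearMap.mk₂_apply]
      exact hfam i j
    intro x y
    rw [hΞ]
    rfl
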